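/- Let the weights μ_1, ..., μ_n ≥ 0 be pairwise distinct and monotone in the degrees d (so that μ_1 > μ_2 > ... > μ_q), and let X be an optimal symmetric solution of ROCP. If x_{i,k−1} > 0 and x_{jk} > 0 for some internal indices i, j ∈ {1, ..., q} and some position k ≤ ⌈q/2⌉, then i ≤ j. -/

import Mathlib

open Matrix Finset

/-- The ROCP objective `f(X) = (1/2) ∑_{i,j} ∑_{k,l} μ_i x_{ik} μ_j x_{jl} |k - l|`. -/
noncomputable def fROCP {n q : ℕ} (μ : Fin n → ℝ) (X : Matrix (Fin n) (Fin q) ℝ) : ℝ :=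
  (1 / 2) * ∑ i, ∑ j, ∑ k, ∑ l,
    μ i * X i k * (μ j * X j l) * |((k : ℕ) : ℝ) - ((l : ℕ) : ℝ)|

/-- The feasible set of the relaxed optimal caterpillar problem (ROCP): box constraints,
unique assignment of each vertex, one internal vertex per backbone position, and balance
of vertex degrees (positions `k = 1, ..., q` are represented by `Fin q`, vertex indices
`i = 1, ..., n` by `Fin n`, internal indices being those with `(i : ℕ) < q`). -/
def ROCPFeasible (n q : ℕ) (d : Fin n → ℕ) (X : Matrix (Fin n) (Fin q) ℝ) : Prop :=
  (∀ i k, 0 ≤ X i k ∧ X i k ≤ 1) ∧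
  (∀ i, ∑ k, X i k = 1) ∧
  (∀ k, (∑ i : Fin n, if (i : ℕ) < q then X i k else 0) = 1) ∧
  (∀ k : Fin q, (k : ℕ) ≠ 0 → (k : ℕ) ≠ q - 1 → ∑ i, ((d i : ℝ) - 2) * X i k = 0) ∧
  (∀ k : Fin q, ((k : ℕ) = 0 ∨ (k : ℕ) = q - 1) → ∑ i, ((d i : ℝ) - 2) * X i k = -1)

/-- A matrix is a symmetric solution if `x_{ik} = x_{i, q-k+1}` for all `i`, `k`. -/
def SymmetricSol {n q : ℕ} (X : Matrix (Fin n) (Fin q) ℝ) : Prop :=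
  ∀ i k, X i k = X i k.rev

/-!
Suppose `j < i`, so that `μ_i < μ_j` and `d_i ≤ d_j`, while `i` sits partly at position `k - 1`
and `j` partly at position `k`. Moving a small mass `ε` of `i` from `k - 1` to `k` and of `j`
from `k` to `k - 1`, together with a mass `ε (d_j - d_i)` of a leaf from `k` to `k - 1` to
restore the degree balance, keeps `X` feasible and moves column weight `t > 0` from position `k`
to position `k - 1`. The objective is the quadratic form `½ wᵀ A w` of the column weights `w`
with `A_{kl} = |k - l|`, so it changes by `t G - t²`, where
`G = ∑_l w_l (|l - (k-1)| - |l - k|)`. By the symmetry of `X`, `G` is half of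
`∑_l w_l (s_l + s_{q+1-l})` with `s_l = ±1` according as `l ≥ k` or not; as `k ≤ ⌈q/2⌉`,
every `s_l + s_{q+1-l}` is nonnegative and `s_k + s_{q+1-k} = 2`, so `G ≥ w_k > 0`,
contradicting optimality.

Positions are numbered from 1 here, as in the paper; position `k` is `⟨k - 1, _⟩ : Fin q`.
-/

open Filter Topology

def pathDist (q : ℕ) : Matrix (Fin q) (Fin q) ℝ := fun k l => |((k : ℕ) : ℝ) - (l : ℕ)|

theorem pathDist_transpose (q : ℕ) : (pathDist q)ᵀ = pathDist q := by
  ext k l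
  exact abs_sub_comm _ _

theorem fROCP_eq_dotProduct {n q : ℕ} (μ : Fin n → ℝ) (X : Matrix (Fin n) (Fin q) ℝ) :
    fROCP μ X = (1 / 2) * ((μ ᵥ* X) ⬝ᵥ (pathDist q *ᵥ (μ ᵥ* X))) := by
  unfold fROCP
  simp only [dotProduct, mulVec, vecMul, pathDist, sum_mul, mul_sum]
  simp_rw [sum_comm (s := (univ : Finset (Fin n))) (t := (univ : Finset (Fin q)))]
  refine sum_congr rfl fun _ _ => sum_congr rfl fun _ _ => ?_
  rw [sum_comm]
  exact sum_congr rfl fun _ _ => sum_congr rfl fun _ _ => by ring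

theorem dotProduct_pathDist_mulVec_add_smul_single_sub_single {q : ℕ} (w : Fin q → ℝ) (t : ℝ)
    (a b : Fin q) :
    (w + t • (Pi.single a 1 - Pi.single b 1)) ⬝ᵥ
        (pathDist q *ᵥ (w + t • (Pi.single a 1 - Pi.single b 1))) = w ⬝ᵥ (pathDist q *ᵥ w)
      + 2 * t * ∑ l, w l * (|((l : ℕ) : ℝ) - (a : ℕ)| - |((l : ℕ) : ℝ) - (b : ℕ)|)
      - 2 * t ^ 2 * |((a : ℕ) : ℝ) - (b : ℕ)| := by
  set v : Fin q → ℝ := Pi.single a 1 - Pi.single b 1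
  have hsymm : ∀ u u' : Fin q → ℝ, u ⬝ᵥ (pathDist q *ᵥ u') = u' ⬝ᵥ (pathDist q *ᵥ u) := by
    intro u u'
    rw [dotProduct_mulVec, ← mulVec_transpose, pathDist_transpose, dotProduct_comm]
  have hv : pathDist q *ᵥ v =
      fun l : Fin q => |((l : ℕ) : ℝ) - (a : ℕ)| - |((l : ℕ) : ℝ) - (b : ℕ)| := by
    ext l
    simp [v, mulVec_sub, pathDist]
  have hvv : v ⬝ᵥ (pathDist q *ᵥ v) = -2 * |((a : ℕ) : ℝ) - (b : ℕ)| := by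
    rw [hv]
    simp only [v, sub_dotProduct, single_dotProduct, sub_self, abs_zero, one_mul,
      abs_sub_comm ((b : ℕ) : ℝ)]
    ring
  rw [mulVec_add, mulVec_smul, add_dotProduct, dotProduct_add, dotProduct_add, smul_dotProduct,
    smul_dotProduct, dotProduct_smul, dotProduct_smul, hsymm v w, hvv, hv]
  simp only [dotProduct, smul_eq_mul]
  ring

theorem fROCP_add_vecMulVec_single_sub_single {n q : ℕ} (μ : Fin n → ℝ)
    (X : Matrix (Fin n) (Fin q) ℝ) (δ : Fin n → ℝ) (a b : Fin q) :
    fROCP μ (X + vecMulVec δ (Pi.single a 1 - Pi.single b 1)) = fROCP μ X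
      + (μ ⬝ᵥ δ) * ∑ l, (μ ᵥ* X) l * (|((l : ℕ) : ℝ) - (a : ℕ)| - |((l : ℕ) : ℝ) - (b : ℕ)|)
      - (μ ⬝ᵥ δ) ^ 2 * |((a : ℕ) : ℝ) - (b : ℕ)| := by
  rw [fROCP_eq_dotProduct, fROCP_eq_dotProduct, vecMul_add, vecMul_vecMulVec,
    dotProduct_pathDist_mulVec_add_smul_single_sub_single]
  ring

theorem abs_sub_sub_abs_sub_succ (l a : ℕ) :
    |(l : ℝ) - a| - |(l : ℝ) - (a + 1 : ℕ)| = if a < l then 1 else -1 := by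
  push_cast
  split_ifs with h
  · have : (a : ℝ) + 1 ≤ l := by exact_mod_cast h
    rw [abs_of_nonneg (by linarith), abs_of_nonneg (by linarith)]
    ring
  · have : (l : ℝ) ≤ a := by exact_mod_cast not_lt.1 h
    rw [abs_of_nonpos (by linarith), abs_of_nonpos (by linarith)]
    ring

theorem SymmetricSol.vecMul_rev {n q : ℕ} {X : Matrix (Fin n) (Fin q) ℝ} (hX : SymmetricSol X)
    (μ : Fin n → ℝ) (l : Fin q) : (μ ᵥ* X) l.rev = (μ ᵥ* X) l :=
  congrArg (μ ⬝ᵥ ·) (funext fun r => (hX r l).symm)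

theorem sum_mul_abs_sub_sub_abs_sub_pos {q : ℕ} {w : Fin q → ℝ} (hw : 0 ≤ w)
    (hsym : ∀ l, w l.rev = w l) {a b : Fin q} (hab : (b : ℕ) = a + 1) (hb : 2 * (b : ℕ) < q)
    (hwb : 0 < w b) :
    0 < ∑ l, w l * (|((l : ℕ) : ℝ) - (a : ℕ)| - |((l : ℕ) : ℝ) - (b : ℕ)|) := by
  set s : Fin q → ℝ := fun l => |((l : ℕ) : ℝ) - (a : ℕ)| - |((l : ℕ) : ℝ) - (b : ℕ)|
  have hs : ∀ l, s l = if (a : ℕ) < l then 1 else -1 := fun l => by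
    simp only [s, hab, abs_sub_sub_abs_sub_succ]
  have hrev : ∑ l, w l * s l = ∑ l, w l * s l.rev := by
    rw [← Equiv.sum_comp Fin.revPerm]
    simp only [Fin.revPerm_apply, hsym]
  suffices 0 < ∑ l, w l * (s l + s l.rev) by
    simp only [mul_add, sum_add_distrib, ← hrev] at this
    linarith
  refine sum_pos' (fun l _ => mul_nonneg (hw l) ?_) ⟨b, mem_univ b, mul_pos hwb ?_⟩ <;>
  · rw [hs, hs, Fin.val_rev]
    split_ifs <;> first | (norm_num; done) | omega

theorem sum_mul_add_vecMulVec {n q : ℕ} (φ : Fin n → ℝ) (X : Matrix (Fin n) (Fin q) ℝ)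
    (δ : Fin n → ℝ) (v : Fin q → ℝ) (l : Fin q) :
    ∑ r, φ r * (X + vecMulVec δ v) r l = ∑ r, φ r * X r l + (φ ⬝ᵥ δ) * v l := by
  simp only [Matrix.add_apply, vecMulVec_apply, mul_add, sum_add_distrib, dotProduct, sum_mul,
    mul_assoc]

theorem ROCPFeasible.add_vecMulVec_single_sub_single {n q : ℕ} {d : Fin n → ℕ}
    {X : Matrix (Fin n) (Fin q) ℝ} (hX : ROCPFeasible n q d X) {a b : Fin q} (hab : a ≠ b)
    {δ : Fin n → ℝ} (hδ : ∀ r, -X r a ≤ δ r ∧ δ r ≤ X r b)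
    (hint : (fun r : Fin n => if (r : ℕ) < q then (1 : ℝ) else 0) ⬝ᵥ δ = 0)
    (hdeg : (fun r => (d r : ℝ) - 2) ⬝ᵥ δ = 0) :
    ROCPFeasible n q d (X + vecMulVec δ (Pi.single a 1 - Pi.single b 1)) := by
  obtain ⟨hbox, hrow, hcol, hdeg_in, hdeg_end⟩ := hX
  refine ⟨fun r l => ?_, fun r => ?_, fun l => ?_, fun l h₀ h₁ => ?_, fun l hl => ?_⟩
  · have hpair : X r a + X r b ≤ 1 :=
      hrow r ▸ add_le_sum (fun l _ => (hbox r l).1) (mem_univ a) (mem_univ b) hab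
    obtain ⟨hδa, hδb⟩ := hδ r
    have := hbox r a
    have := hbox r b
    rw [Matrix.add_apply, vecMulVec_apply, Pi.sub_apply]
    rcases eq_or_ne l a with rfl | ha
    · rw [Pi.single_eq_same, Pi.single_eq_of_ne hab]
      constructor <;> linarith
    rcases eq_or_ne l b with rfl | hb
    · rw [Pi.single_eq_same, Pi.single_eq_of_ne hab.symm]
      constructor <;> linarith
    · simpa [Pi.single_eq_of_ne ha, Pi.single_eq_of_ne hb] using hbox r l
  · simp only [Matrix.add_apply, vecMulVec_apply, Pi.sub_apply, sum_add_distrib, hrow, ← mul_sum,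
      sum_sub_distrib, sum_pi_single', mem_univ, ↓reduceIte, sub_self, mul_zero, add_zero]
  · have := sum_mul_add_vecMulVec (fun r : Fin n => if (r : ℕ) < q then (1 : ℝ) else 0) X δ
      (Pi.single a 1 - Pi.single b 1) l
    simp only [ite_mul, one_mul, zero_mul, hint] at this
    rw [this, hcol]
    ring
  · rw [sum_mul_add_vecMulVec, hdeg, hdeg_in l h₀ h₁]
    ring
  · rw [sum_mul_add_vecMulVec, hdeg, hdeg_end l hl]
    ring

theorem tendsto_mul_const_nhdsGT_zero (K : ℝ) :
    Tendsto (fun ε : ℝ => ε * K) (𝓝[>] 0) (𝓝 0) := by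
  simpa using ((continuous_mul_const K).tendsto 0).mono_left nhdsWithin_le_nhds

theorem eventually_neg_le_mul_and_mul_le {x y c : ℝ} (hx : 0 ≤ x) (hy : 0 ≤ y)
    (hneg : c < 0 → 0 < x) (hpos : 0 < c → 0 < y) :
    ∀ᶠ ε in 𝓝[>] 0, -x ≤ ε * c ∧ ε * c ≤ y := by
  rcases lt_trichotomy c 0 with hc | rfl | hc
  · filter_upwards [self_mem_nhdsWithin,
      (tendsto_mul_const_nhdsGT_zero c).eventually_const_lt (neg_neg_of_pos (hneg hc))]
      with ε hε h
    exact ⟨h.le, by nlinarith [hε.out]⟩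
  · simp [hx, hy]
  · filter_upwards [self_mem_nhdsWithin,
      (tendsto_mul_const_nhdsGT_zero c).eventually_lt_const (hpos hc)] with ε hε h
    exact ⟨by nlinarith [hε.out], h.le⟩

theorem exists_fROCP_lt_of_transfer {n q : ℕ} {d : Fin n → ℕ} {μ : Fin n → ℝ}
    {X : Matrix (Fin n) (Fin q) ℝ} (hX : ROCPFeasible n q d X) {a b : Fin q} (hab : a ≠ b)
    (c : Fin n → ℝ) (hneg : ∀ r, c r < 0 → 0 < X r a) (hpos : ∀ r, 0 < c r → 0 < X r b)
    (hint : (fun r : Fin n => if (r : ℕ) < q then (1 : ℝ) else 0) ⬝ᵥ c = 0)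
    (hdeg : (fun r => (d r : ℝ) - 2) ⬝ᵥ c = 0)
    (hgain : 0 < (μ ⬝ᵥ c) *
      ∑ l, (μ ᵥ* X) l * (|((l : ℕ) : ℝ) - (a : ℕ)| - |((l : ℕ) : ℝ) - (b : ℕ)|)) :
    ∃ Y, ROCPFeasible n q d Y ∧ fROCP μ X < fROCP μ Y := by
  set G := ∑ l, (μ ᵥ* X) l * (|((l : ℕ) : ℝ) - (a : ℕ)| - |((l : ℕ) : ℝ) - (b : ℕ)|)
  set K := (μ ⬝ᵥ c) ^ 2 * |((a : ℕ) : ℝ) - (b : ℕ)|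
  have hsmall : ∀ᶠ ε in 𝓝[>] (0 : ℝ), ∀ r, -X r a ≤ ε * c r ∧ ε * c r ≤ X r b :=
    eventually_all.2 fun r => eventually_neg_le_mul_and_mul_le (hX.1 r a).1 (hX.1 r b).1
      (hneg r) (hpos r)
  have hsecond : ∀ᶠ ε in 𝓝[>] (0 : ℝ), ε * K < (μ ⬝ᵥ c) * G :=
    (tendsto_mul_const_nhdsGT_zero K).eventually_lt_const hgain
  obtain ⟨ε, hε, hbox, hlt⟩ :=
    ((eventually_mem_nhdsWithin (a := (0 : ℝ)) (s := Set.Ioi 0)).and (hsmall.and hsecond)).exists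
  refine ⟨_, hX.add_vecMulVec_single_sub_single hab (δ := ε • c) hbox ?_ ?_, ?_⟩
  · rw [dotProduct_smul, hint, smul_zero]
  · rw [dotProduct_smul, hdeg, smul_zero]
  · rw [fROCP_add_vecMulVec_single_sub_single, dotProduct_smul, smul_eq_mul]
    nlinarith [mul_lt_mul_of_pos_left hlt (Set.mem_Ioi.1 hε)]

theorem exists_fROCP_lt_of_swap {n q : ℕ} {d : Fin n → ℕ} {μ : Fin n → ℝ}
    {X : Matrix (Fin n) (Fin q) ℝ} (hX : ROCPFeasible n q d X) {a b : Fin q} (hab : a ≠ b)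
    {i j p : Fin n} (hij : i ≠ j) (hi : (i : ℕ) < q) (hj : (j : ℕ) < q) (hp : ¬(p : ℕ) < q)
    (hdp : d p = 1) (hdij : d i ≤ d j) (hia : 0 < X i a) (hjb : 0 < X j b)
    (hpb : d i < d j → 0 < X p b)
    (hgain : 0 < (μ j - μ i + ((d j : ℝ) - d i) * μ p) *
      ∑ l, (μ ᵥ* X) l * (|((l : ℕ) : ℝ) - (a : ℕ)| - |((l : ℕ) : ℝ) - (b : ℕ)|)) :
    ∃ Y, ROCPFeasible n q d Y ∧ fROCP μ X < fROCP μ Y := by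
  have hpi : p ≠ i := by rintro rfl; exact hp hi
  have hpj : p ≠ j := by rintro rfl; exact hp hj
  have hs : (0 : ℝ) ≤ (d j : ℝ) - d i := sub_nonneg.2 (Nat.cast_le.2 hdij)
  set c : Fin n → ℝ := Pi.single j 1 - Pi.single i 1 + ((d j : ℝ) - d i) • Pi.single p 1
  have hc : ∀ φ : Fin n → ℝ, φ ⬝ᵥ c = φ j - φ i + ((d j : ℝ) - d i) * φ p := fun φ => by
    simp [c, dotProduct_add, dotProduct_sub, dotProduct_smul]
  have hcr : ∀ r, c r = (if r = j then 1 else 0) - (if r = i then 1 else 0)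
      + ((d j : ℝ) - d i) * (if r = p then 1 else 0) := fun r => by
    simp [c, Pi.single_apply]
  refine exists_fROCP_lt_of_transfer hX hab c (fun r hr => ?_) (fun r hr => ?_) ?_ ?_ (hc μ ▸ hgain)
  · rcases eq_or_ne r i with rfl | hri
    · exact hia
    rw [hcr, if_neg hri] at hr
    split_ifs at hr <;> linarith
  · rcases eq_or_ne r j with rfl | hrj
    · exact hjb
    rcases eq_or_ne r p with rfl | hrp
    · rw [hcr, if_neg hrj, if_neg hpi, if_pos rfl] at hr
      exact hpb (by exact_mod_cast (by linarith : (d i : ℝ) < d j))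
    rw [hcr, if_neg hrj, if_neg hrp] at hr
    split_ifs at hr <;> linarith
  · simp [hc, hi, hj, hp]
  · rw [hc, hdp]
    push_cast
    ring

theorem exists_lt_two_of_sum_eq {n : ℕ} (hn : 0 < n) {d : Fin n → ℕ}
    (hd : ∑ i, d i = 2 * (n - 1)) : ∃ p, d p < 2 := by
  by_contra! h
  have := sum_le_sum fun i (_ : i ∈ univ) => h i
  simp only [sum_const, card_univ, Fintype.card_fin, smul_eq_mul] at this
  omega

theorem exists_lt_two_and_pos_of_sum_eq_zero {n : ℕ} {d : Fin n → ℕ} {x : Fin n → ℝ}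
    (hx : 0 ≤ x) (hbal : ∑ r, ((d r : ℝ) - 2) * x r = 0) {j : Fin n} (hj : 2 < d j)
    (hxj : 0 < x j) : ∃ p, d p < 2 ∧ 0 < x p := by
  have hterm : ∃ p, ((d p : ℝ) - 2) * x p < 0 := by
    by_contra! h
    have hj' : (2 : ℝ) < d j := by exact_mod_cast hj
    have := (sum_eq_zero_iff_of_nonneg fun r _ => h r).1 hbal j (mem_univ j)
    nlinarith
  obtain ⟨p, hp⟩ := hterm
  rcases mul_neg_iff.1 hp with ⟨-, hneg⟩ | ⟨hd, hpos⟩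
  · exact absurd (hx p) hneg.not_ge
  · exact ⟨p, by exact_mod_cast (by linarith : (d p : ℝ) < 2), hpos⟩

theorem internal_ordering_in_optimal_symmetric_solution (n q : ℕ)
    (d : Fin n → ℕ) (μ : Fin n → ℝ)
    (hμ : ∀ i, 0 ≤ μ i)
    (hμ_inj : Function.Injective μ)
    (hμ_mono : ∀ i j : Fin n, 2 ≤ d i → 2 ≤ d j → i < j → μ j ≤ μ i)
    (hd_anti : ∀ i j : Fin n, i ≤ j → d j ≤ d i)
    (hd_sum : ∑ i, d i = 2 * (n - 1))
    (hd_int : ∀ i : Fin n, (i : ℕ) < q → 1 < d i)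
    (hd_pend : ∀ i : Fin n, q ≤ (i : ℕ) → d i = 1)
    (X : Matrix (Fin n) (Fin q) ℝ)
    (hfeas : ROCPFeasible n q d X)
    (hopt : ∀ Y, ROCPFeasible n q d Y → fROCP μ Y ≤ fROCP μ X)
    (hsym : SymmetricSol X)
    (i j : Fin n) (hi : (i : ℕ) < q) (hj : (j : ℕ) < q)
    (k : ℕ) (hk2 : 2 ≤ k) (hkc : k ≤ (q + 1) / 2)
    (hxi : 0 < X i ⟨k - 2, by omega⟩) (hxj : 0 < X j ⟨k - 1, by omega⟩) :
    i ≤ j := by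
  by_contra! hji
  set a : Fin q := ⟨k - 2, by omega⟩
  set b : Fin q := ⟨k - 1, by omega⟩
  have hdij : d i ≤ d j := hd_anti j i hji.le
  have hμij : μ i < μ j :=
    (hμ_mono j i (hd_int j hj) (hd_int i hi) hji).lt_of_ne (hμ_inj.ne hji.ne')
  obtain ⟨p, hp2, hpb⟩ : ∃ p, d p < 2 ∧ (d i < d j → 0 < X p b) := by
    rcases hdij.lt_or_eq with hlt | heq
    · obtain ⟨p, hp⟩ := exists_lt_two_and_pos_of_sum_eq_zero (fun r => (hfeas.1 r b).1)
        (hfeas.2.2.2.1 b (by simp [b]; omega) (by simp [b]; omega))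
        (by have := hd_int i hi; omega) hxj
      exact ⟨p, hp.1, fun _ => hp.2⟩
    · obtain ⟨p, hp⟩ := exists_lt_two_of_sum_eq (by omega) hd_sum
      exact ⟨p, hp, by omega⟩
  have hp : ¬(p : ℕ) < q := fun h => by have := hd_int p h; omega
  have hw : 0 ≤ μ ᵥ* X := fun l => dotProduct_nonneg_of_nonneg hμ fun r => (hfeas.1 r l).1
  have hwb : 0 < (μ ᵥ* X) b :=
    sum_pos' (fun r _ => mul_nonneg (hμ r) (hfeas.1 r b).1)
      ⟨j, mem_univ j, mul_pos ((hμ i).trans_lt hμij) hxj⟩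
  have hG := sum_mul_abs_sub_sub_abs_sub_pos hw (hsym.vecMul_rev μ) (a := a) (by simp [a, b]; omega)
    (by simp [b]; omega) hwb
  have hD : 0 < μ j - μ i + ((d j : ℝ) - d i) * μ p := by
    nlinarith [hμ p, (sub_nonneg.2 (Nat.cast_le.2 hdij) : (0 : ℝ) ≤ (d j : ℝ) - d i)]
  obtain ⟨Y, hY, hlt⟩ := exists_fROCP_lt_of_swap hfeas (by simp [a, b, Fin.ext_iff]; omega)
    hji.ne' hi hj hp (hd_pend p (not_lt.1 hp)) hdij hxi hxj hpb (mul_pos hD hG)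
  exact (hopt Y hY).not_gt hlt
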